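/- arXiv:1907.04109 — 3 statements merged into one kernel-verified Lean document; each statement's English description precedes it below -/
import Mathlib

section
/- Let k ∈ ℂ and let f ∈ ℂ[[X]] satisfy coeff_0 f = 0, coeff_1 f = 1, and the formal differential equation (f')² = (1 − f²)·(1 − k²·f²) (these conditions characterize the formal power series of the Jacobi elliptic function Θ_k = sn(k|·)). Then 2·f·f' = (f∘(2X))·((f')² − f·f''), i.e. 𝔗²Θ_k(X) = Θ_k(2X)/2. -/
/-!
With `m = k²`, from `(f')² = (1 - f²)(1 - m f²)` one gets `f'' = -(1 + m) f + 2 m f³`, hence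
`(f')² - f f'' = 1 - m f⁴`, and the claim becomes the duplication formula
`f(2X) · (1 - m f⁴) = 2 f f'` for `sn`. Both `f(2X)` and the quotient `2 f f' / (1 - m f⁴)`
solve `y'' = 4 (-(1 + m) y + 2 m y³)` with `y(0) = 0`, `y'(0) = 2`; their difference `r` then
satisfies a linear equation `r'' = r · T`, which forces `r = 0` coefficient by coefficient.
-/

open PowerSeries

theorem Derivation.map_ofNat {R A : Type*} [CommSemiring R] [CommSemiring A] [Algebra R A]
    (D : Derivation R A A) (n : ℕ) [n.AtLeastTwo] : D (no_index (OfNat.ofNat n : A)) = 0 :=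
  D.map_natCast n

theorem Derivation.pow_three_mul_apply_apply_of_mul_eq {R A : Type*} [CommRing R] [CommRing A]
    [Algebra R A] (D : Derivation R A A) {y u v : A} (h : y * u = v) :
    u ^ 3 * D (D y) = u ^ 2 * D (D v) - 2 * u * D u * D v + 2 * D u ^ 2 * v - u * D (D u) * v := by
  have h1 := congrArg D h
  have h2 := congrArg D h1
  simp only [Derivation.leibniz, map_add, smul_eq_mul] at h1 h2
  linear_combination u ^ 2 * h2 - 2 * u * D u * h1 + (2 * D u ^ 2 - u * D (D u)) * h

namespace PowerSeries

theorem eq_zero_of_derivative_derivative_eq_mul {R : Type*} [CommRing R] [IsDomain R]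
    [CharZero R] {r T : R⟦X⟧} (h0 : constantCoeff r = 0) (h1 : constantCoeff (d⁄dX R r) = 0)
    (h : d⁄dX R (d⁄dX R r) = r * T) : r = 0 := by
  ext n
  induction n using Nat.strong_induction_on with
  | _ n ih =>
    match n with
    | 0 => simpa using h0
    | 1 => simpa [← coeff_zero_eq_constantCoeff_apply, coeff_derivative] using h1
    | n + 2 =>
      have hn := congrArg (coeff n) h
      rw [coeff_derivative, coeff_derivative, coeff_mul, Finset.sum_eq_zero] at hn
      · have hn2 : (n : R) + 2 ≠ 0 := by exact_mod_cast (n + 1).succ_ne_zero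
        simpa [Nat.cast_add_one_ne_zero, add_assoc, one_add_one_eq_two, hn2] using hn
      · intro p hp
        rw [ih p.1 (by have := Finset.HasAntidiagonal.antidiagonal.fst_le hp; omega), map_zero,
          zero_mul]

theorem derivative_rescale {R : Type*} [CommRing R] (a : R) (f : R⟦X⟧) :
    d⁄dX R (rescale a f) = C a * rescale a (d⁄dX R f) := by
  ext n
  simp only [coeff_derivative, coeff_rescale, coeff_C_mul, pow_succ]
  ring

theorem constantCoeff_rescale {R : Type*} [CommRing R] (a : R) (f : R⟦X⟧) :
    constantCoeff (rescale a f) = constantCoeff f := by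
  rw [← coeff_zero_eq_constantCoeff_apply, ← coeff_zero_eq_constantCoeff_apply, coeff_rescale,
    pow_zero, one_mul]

theorem rescale_C {R : Type*} [CommRing R] (a r : R) : rescale a (C r) = C r := by
  ext n
  simp only [coeff_rescale, coeff_C]
  split_ifs with hn <;> simp [hn]

section Elliptic

variable {R : Type*} [CommRing R] [IsDomain R] {m : R} {f : R⟦X⟧}

theorem derivative_derivative_of_sq_derivative [NeZero (2 : R)] (hf : d⁄dX R f ≠ 0)
    (hde : d⁄dX R f ^ 2 = (1 - f ^ 2) * (1 - C m * f ^ 2)) :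
    d⁄dX R (d⁄dX R f) = -(1 + C m) * f + 2 * C m * f ^ 3 := by
  have hD := congrArg (d⁄dX R) hde
  simp only [Derivation.leibniz, Derivation.leibniz_pow, map_sub, derivative_C,
    Derivation.map_one_eq_zero, smul_eq_mul, nsmul_eq_mul] at hD
  have h : (2 * d⁄dX R f) * (d⁄dX R (d⁄dX R f) - (-(1 + C m) * f + 2 * C m * f ^ 3)) = 0 := by
    linear_combination hD
  have h2 : (2 : R⟦X⟧) ≠ 0 := by
    rw [← map_ofNat C 2]
    exact (map_ne_zero_iff _ C_injective).mpr two_ne_zero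
  exact sub_eq_zero.mp ((mul_eq_zero.mp h).resolve_left (mul_ne_zero h2 hf))

theorem derivative_derivative_of_duplication {y : R⟦X⟧}
    (hde : d⁄dX R f ^ 2 = (1 - f ^ 2) * (1 - C m * f ^ 2))
    (hf : d⁄dX R (d⁄dX R f) = -(1 + C m) * f + 2 * C m * f ^ 3)
    (hu : 1 - C m * f ^ 4 ≠ 0) (hy : y * (1 - C m * f ^ 4) = 2 * f * d⁄dX R f) :
    d⁄dX R (d⁄dX R y) = 4 * (-(1 + C m) * y + 2 * C m * y ^ 3) := by
  refine mul_left_cancel₀ (pow_ne_zero 3 hu) ?_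
  rw [Derivation.pow_three_mul_apply_apply_of_mul_eq _ hy]
  simp only [Derivation.leibniz, Derivation.leibniz_pow, map_sub, map_add, map_neg, derivative_C,
    Derivation.map_one_eq_zero, Derivation.map_ofNat, Derivation.map_natCast, map_zero,
    smul_eq_mul, nsmul_eq_mul, hf]
  -- after clearing `y` via `hy`, both sides are odd in `f'`; `hde` removes the `f'³` terms
  linear_combination 24 * C m * f ^ 3 * (C m * f ^ 4 - 1) * d⁄dX R f * hde
    - 4 * (-(1 + C m) * (1 - C m * f ^ 4) ^ 2 + 2 * C m * ((y * (1 - C m * f ^ 4)) ^ 2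
      + y * (1 - C m * f ^ 4) * (2 * f * d⁄dX R f) + (2 * f * d⁄dX R f) ^ 2)) * hy

end Elliptic

theorem rescale_two_mul_eq_of_sq_derivative {K : Type*} [Field K] [CharZero K] {m : K}
    {f : K⟦X⟧} (h0 : constantCoeff f = 0) (h1 : constantCoeff (d⁄dX K f) = 1)
    (hde : d⁄dX K f ^ 2 = (1 - f ^ 2) * (1 - C m * f ^ 2)) :
    rescale 2 f * (1 - C m * f ^ 4) = 2 * f * d⁄dX K f := by
  have hf := derivative_derivative_of_sq_derivative (by rintro h; simp [h] at h1) hde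
  set u := 1 - C m * f ^ 4
  have hu : constantCoeff u ≠ 0 := by simp [u, h0]
  set y := 2 * f * d⁄dX K f * u⁻¹
  have hy : y * u = 2 * f * d⁄dX K f := by
    rw [mul_assoc, PowerSeries.inv_mul_cancel _ hu, mul_one]
  have hu0 : u ≠ 0 := fun h => hu (by rw [h, map_zero])
  have hy' := derivative_derivative_of_duplication hde hf hu0 hy
  have hg' : d⁄dX K (d⁄dX K (rescale 2 f)) =
      4 * (-(1 + C m) * rescale 2 f + 2 * C m * rescale 2 f ^ 3) := by
    simp only [derivative_rescale, Derivation.leibniz, smul_eq_mul, hf, map_add, map_mul, map_neg,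
      map_pow, map_one, map_ofNat, Derivation.map_ofNat, rescale_C]
    ring
  have hdiff : rescale 2 f - y = 0 := by
    refine eq_zero_of_derivative_derivative_eq_mul (T := 4 * (-(1 + C m)
      + 2 * C m * (rescale 2 f ^ 2 + rescale 2 f * y + y ^ 2))) ?_ ?_ ?_
    · simp [y, h0, constantCoeff_rescale]
    · simp [y, u, h0, h1, derivative_rescale, constantCoeff_rescale, map_ofNat]
    · rw [map_sub, map_sub, hg', hy']
      ring
  rw [sub_eq_zero.mp hdiff, hy]

end PowerSeries

/-- **Theorem 1.1.** Let `f` be the formal Jacobi elliptic sine `Θ_k`, i.e. the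
normalized power series solution of `(f')² = (1 − f²)·(1 − k²·f²)`.  Then
`𝔗²Θ_k(X) = Θ_k(2X)/2`, written division-free as
`2·f·f' = (f∘(2X))·((f')² − f·f'')`. -/
theorem statement7 (k : ℂ) (f : PowerSeries ℂ)
    (h0 : coeff 0 f = 0) (h1 : coeff 1 f = 1)
    (hde : (d⁄dX ℂ f) ^ 2 = (1 - f ^ 2) * (1 - C (k ^ 2) * f ^ 2)) :
    2 * f * d⁄dX ℂ f =
      rescale 2 f * ((d⁄dX ℂ f) ^ 2 - f * d⁄dX ℂ (d⁄dX ℂ f)) := by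
  rw [coeff_zero_eq_constantCoeff_apply] at h0
  have h1' : constantCoeff (d⁄dX ℂ f) = 1 := by
    rw [← coeff_zero_eq_constantCoeff_apply, coeff_derivative, h1]
    norm_num
  have hf := derivative_derivative_of_sq_derivative (by rintro h; simp [h] at h1') hde
  rw [show d⁄dX ℂ f ^ 2 - f * d⁄dX ℂ (d⁄dX ℂ f) = 1 - C (k ^ 2) * f ^ 4 by
      linear_combination hde - f * hf,
    rescale_two_mul_eq_of_sq_derivative h0 h1' hde]
end

section
/- Let φ ∈ X + X²ℂ[[X]] and ν ∈ ℂ with ν ≠ 0, and write exp(u) := Σ_{k≥0} uᵏ/k! for any u ∈ ℂ[[X]] with zero constant term. Let h ∈ X + X²ℂ[[X]] be the compositional inverse of X·exp(−φ) (i.e. (X·exp(−φ))∘h = X). Then the identity h = h'·X·exp((1/ν)·(φ∘(−νX))) (i.e. 𝔗Q(X·e^{−φ(X)}) = X·e^{(1/ν)φ(−νX)}) holds if and only if for every m ∈ ℕ: coeff_m(exp(−(1/ν)·(φ∘(−νX)))) = Σ_{n=0}^{m} (mⁿ/n!)·coeff_m(φⁿ), with the convention 0⁰ = 1. (In the paper's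 notation: e^{−(1/ν)φ_ν(−νx)} = Σ_{n≥0} (x·d/dx)ⁿ(φ_ν(x))ⁿ/n!.) -/
/-!
Put `E = e^{-φ} ∘ h`. The inverse relation says `h * E = X`, so with `ψ = φ(-νX) / ν` the
identity `h = h' * X * e^ψ` is equivalent to `e^{-ψ} = E * h'`. Writing `h = X * u` with
`u = e^φ ∘ h = 1 / E`, Lagrange inversion turns the `m`-th coefficient of
`E * h' = E ^ (m + 1) * (e^{mφ} ∘ h) * h'` into that of `e^{mφ}`, which is
`Σ_n mⁿ / n! * [X^m] φⁿ`.
-/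

open PowerSeries Finset

/-- Composition `f ∘ g` of formal power series (intended for `g` with zero constant
term). -/
noncomputable def pcomp (f g : PowerSeries ℂ) : PowerSeries ℂ :=
  PowerSeries.mk fun n => ∑ k ∈ range (n + 1), coeff k f * coeff n (g ^ k)

/-- Formal exponential `exp(u) = Σ_{k≥0} uᵏ/k!` of a power series `u` with zero
constant term. -/
noncomputable def pexp (u : PowerSeries ℂ) : PowerSeries ℂ :=
  pcomp (PowerSeries.exp ℂ) u

theorem eq_mul_mul_iff_eq_mul {R : Type*} [CommRing R] [IsDomain R] {h e d x a b : R}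
    (hx : h * e = x) (hab : a * b = 1) (hh : h ≠ 0) : h = d * (x * a) ↔ b = e * d := by
  constructor
  · intro H
    refine mul_left_cancel₀ hh ?_
    linear_combination b * H + d * x * hab - d * hx
  · intro H
    linear_combination a * h * H - h * hab + a * d * hx

namespace PowerSeries

variable {R : Type*} [CommRing R]

theorem derivative_eq_neg_sq_mul_of_mul_eq_one {u v : R⟦X⟧} (huv : u * v = 1) :
    d⁄dX R v = -(v ^ 2 * d⁄dX R u) := by
  have hd : u * d⁄dX R v + v * d⁄dX R u = 0 := by
    have := congrArg (d⁄dX R) huv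
    rwa [Derivation.leibniz, Derivation.map_one_eq_zero, smul_eq_mul, smul_eq_mul] at this
  linear_combination v * hd - d⁄dX R v * huv

variable [NoZeroDivisors R] [CharZero R]

-- For `s > 0`: `v ^ (s + 1) * (X * u)' = v ^ s - X * (v ^ s)' / s`, and the coefficient of `X ^ s`
-- in `X * f'` is `s` times that in `f`.
theorem coeff_pow_succ_mul_derivative_X_mul {u v : R⟦X⟧} (huv : u * v = 1) (s : ℕ) :
    coeff s (v ^ (s + 1) * d⁄dX R (X * u)) = if s = 0 then 1 else 0 := by
  have hsplit : v ^ (s + 1) * d⁄dX R (X * u) = v ^ s + X * (v ^ (s + 1) * d⁄dX R u) := by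
    rw [Derivation.leibniz, derivative_X, smul_eq_mul, smul_eq_mul]
    linear_combination v ^ s * huv
  rw [hsplit, map_add]
  rcases s with _ | t
  · simp
  · have hpow : d⁄dX R (v ^ (t + 1)) = -C ((t : R) + 1) * (v ^ (t + 2) * d⁄dX R u) := by
      rw [Derivation.leibniz_pow, derivative_eq_neg_sq_mul_of_mul_eq_one huv, nsmul_eq_mul,
        smul_eq_mul]
      push_cast
      simp only [map_add, map_natCast, map_one]
      ring
    have hcoeff := congrArg (coeff t) hpow
    rw [coeff_derivative, neg_mul, map_neg, coeff_C_mul] at hcoeff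
    have hkey : ((t : R) + 1) * (coeff (t + 1) (v ^ (t + 1)) + coeff t (v ^ (t + 2) * d⁄dX R u))
        = 0 := by
      linear_combination hcoeff
    rw [coeff_succ_X_mul, if_neg t.succ_ne_zero]
    exact (mul_eq_zero.mp hkey).resolve_left (Nat.cast_add_one_ne_zero t)

theorem coeff_pow_succ_mul_pow_mul_derivative_X_mul {u v : R⟦X⟧} (huv : u * v = 1) {r i : ℕ}
    (hi : i ≤ r) :
    coeff r (v ^ (r + 1) * (X * u) ^ i * d⁄dX R (X * u)) = if i = r then 1 else 0 := by
  obtain ⟨s, rfl⟩ := Nat.exists_eq_add_of_le hi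
  have hcancel : v ^ (i + s + 1) * (X * u) ^ i = X ^ i * v ^ (s + 1) := by
    have huvi : (u * v) ^ i = 1 := by rw [huv, one_pow]
    linear_combination X ^ i * v ^ (s + 1) * huvi
  rw [hcancel, mul_assoc, add_comm, coeff_X_pow_mul, coeff_pow_succ_mul_derivative_X_mul huv]
  simp

/-- **Lagrange inversion**: for `g = X * u` with `u * v = 1`, the coefficient of `X ^ r` in `P`
is the residue of `(P ∘ g) * g' / g ^ (r + 1)` (note `v ^ (r + 1) = (X / g) ^ (r + 1)`). -/
theorem coeff_pow_succ_mul_subst_mul_derivative {u v : R⟦X⟧} (huv : u * v = 1) (P : R⟦X⟧)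
    (r : ℕ) : coeff r (v ^ (r + 1) * P.subst (X * u) * d⁄dX R (X * u)) = coeff r P := by
  have hg : HasSubst (X * u) := HasSubst.of_constantCoeff_zero' (by simp)
  set Q : R⟦X⟧ := mk fun i ↦ coeff (i + (r + 1)) P
  have hP := eq_X_pow_mul_shift_add_trunc (r + 1) P
  have htail : coeff r (v ^ (r + 1) * (X ^ (r + 1) * Q).subst (X * u) * d⁄dX R (X * u)) = 0 := by
    rw [subst_mul hg, subst_pow hg, subst_X hg]
    refine X_pow_dvd_iff.mp (Dvd.intro (v ^ (r + 1) * u ^ (r + 1) * Q.subst (X * u) *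
      d⁄dX R (X * u)) (by ring)) r (lt_add_one r)
  conv_lhs => rw [hP]
  rw [subst_add hg, mul_add, add_mul, map_add, htail, zero_add, subst_coe hg,
    Polynomial.aeval_eq_sum_range' (natDegree_trunc_lt P r), Finset.mul_sum, Finset.sum_mul,
    map_sum]
  have hterm : ∀ i ∈ range (r + 1), coeff r (v ^ (r + 1) * ((trunc (r + 1) P).coeff i •
      (X * u) ^ i) * d⁄dX R (X * u)) = if i = r then coeff r P else 0 := by
    intro i hi
    rw [mul_smul_comm, smul_mul_assoc, map_smul,
      coeff_pow_succ_mul_pow_mul_derivative_X_mul huv (Nat.lt_succ_iff.mp (mem_range.mp hi)),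
      coeff_trunc, if_pos (mem_range.mp hi)]
    split_ifs with hir <;> simp [hir]
  rw [Finset.sum_congr rfl hterm, Finset.sum_ite_eq', if_pos (mem_range.mpr (lt_add_one r))]

theorem coeff_subst_mul_derivative_eq_coeff_pow {V W h : R⟦X⟧} (hWV : W * V = 1)
    (hh : HasSubst h) (hinv : (X * V).subst h = X) (m : ℕ) :
    coeff m (V.subst h * d⁄dX R h) = coeff m (W ^ m) := by
  set E : R⟦X⟧ := V.subst h
  set u : R⟦X⟧ := W.subst h
  have huE : u * E = 1 := by
    rw [← subst_mul hh, hWV, ← coe_substAlgHom hh, map_one]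
  have hhE : h * E = X := by rw [← hinv, subst_mul hh, subst_X hh]
  have hXu : X * u = h := by linear_combination -u * hhE + h * huE
  calc coeff m (E * d⁄dX R h)
      = coeff m (E ^ (m + 1) * (W ^ m).subst (X * u) * d⁄dX R (X * u)) := by
        rw [hXu, subst_pow hh, pow_succ', mul_assoc E, ← mul_pow, mul_comm E u, huE, one_pow,
          mul_one]
    _ = coeff m (W ^ m) := coeff_pow_succ_mul_subst_mul_derivative huE _ m

end PowerSeries

theorem pcomp_eq_subst (f : PowerSeries ℂ) {g : PowerSeries ℂ} (hg : constantCoeff g = 0) :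
    pcomp f g = f.subst g := by
  ext n
  rw [pcomp, coeff_mk, coeff_subst' (HasSubst.of_constantCoeff_zero' hg),
    finsum_eq_sum_of_support_subset (s := range (n + 1))]
  · simp only [smul_eq_mul]
  · intro k hk
    by_contra hkn
    refine hk (smul_eq_zero_of_right _ (coeff_of_lt_order _ ?_))
    calc (n : ℕ∞) < k := by simpa using hkn
      _ ≤ (g ^ k).order := le_order_pow_of_constantCoeff_eq_zero k hg

theorem pexp_mul_pexp_neg {w : PowerSeries ℂ} (hw : constantCoeff w = 0) :
    pexp w * pexp (-w) = 1 := by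
  have hw' : HasSubst w := HasSubst.of_constantCoeff_zero' hw
  have hneg : pexp (-w) = (rescale (-1) (exp ℂ)).subst w := by
    rw [rescale_eq_subst, subst_comp_subst_apply (HasSubst.smul_X' _) hw', subst_smul hw',
      subst_X hw', neg_one_smul, pexp, pcomp_eq_subst _ (by simp [hw])]
  rw [hneg, pexp, pcomp_eq_subst _ hw, ← subst_mul hw',
    show exp ℂ * rescale (-1) (exp ℂ) = 1 from exp_mul_exp_neg_eq_one,
    ← coe_substAlgHom hw', map_one]

theorem coeff_pexp_pow {φ : PowerSeries ℂ} (hφ : constantCoeff φ = 0) (m : ℕ) :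
    coeff m (pexp φ ^ m) =
      ∑ n ∈ range (m + 1), ((m : ℂ) ^ n / (n.factorial : ℂ)) * coeff m (φ ^ n) := by
  rw [pexp, pcomp_eq_subst _ hφ, ← subst_pow (HasSubst.of_constantCoeff_zero' hφ),
    exp_pow_eq_rescale_exp, ← pcomp_eq_subst _ hφ, pcomp, coeff_mk]
  refine Finset.sum_congr rfl fun n _ ↦ ?_
  rw [coeff_rescale, coeff_exp, eq_ratCast]
  push_cast
  ring

theorem statement13_general (φ : PowerSeries ℂ)
    (hφ0 : coeff 0 φ = 0)
    (ν : ℂ)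
    (h : PowerSeries ℂ)
    (hh0 : coeff 0 h = 0)
    (hinv : pcomp (X * pexp (-φ)) h = X) :
    (h = d⁄dX ℂ h * (X * pexp (C (1 / ν) * rescale (-ν) φ))) ↔
      ∀ m : ℕ,
        coeff m (pexp (C (-(1 / ν)) * rescale (-ν) φ)) =
          ∑ n ∈ range (m + 1), ((m : ℂ) ^ n / (n.factorial : ℂ)) * coeff m (φ ^ n) := by
  rw [coeff_zero_eq_constantCoeff_apply] at hφ0 hh0
  have hh : HasSubst h := HasSubst.of_constantCoeff_zero' hh0
  rw [pcomp_eq_subst _ hh0] at hinv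
  set ψ := C (1 / ν) * rescale (-ν) φ
  have hψ : constantCoeff ψ = 0 := by simp [ψ, ← coeff_zero_eq_constantCoeff_apply, hφ0]
  have hE : h * (pexp (-φ)).subst h = X := by rw [← hinv, subst_mul hh, subst_X hh]
  rw [eq_mul_mul_iff_eq_mul hE (pexp_mul_pexp_neg hψ) (left_ne_zero_of_mul (hE ▸ X_ne_zero)),
    show C (-(1 / ν)) * rescale (-ν) φ = -ψ by simp [ψ], PowerSeries.ext_iff]
  refine forall_congr' fun m ↦ ?_
  rw [coeff_subst_mul_derivative_eq_coeff_pow (pexp_mul_pexp_neg hφ0) hh hinv,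
    coeff_pexp_pow hφ0]

/-- **Observation 1.7.** Let `φ ∈ X + X²ℂ[[X]]`, `ν ≠ 0`, and let `h` be the
compositional inverse of `X·exp(−φ)`.  Then the identity
`𝔗Q(X·e^{−φ(X)}) = X·e^{(1/ν)φ(−νX)}` (i.e. `h = h'·X·exp((1/ν)·φ(−νX))`) holds
iff `e^{−(1/ν)φ(−νX)} = Σ_{n≥0} (X·d/dX)ⁿ(φ(X))ⁿ/n!`, i.e. iff for every `m`,
`coeff_m exp(−(1/ν)·φ(−νX)) = Σ_{n=0}^{m} (mⁿ/n!)·coeff_m(φⁿ)` (with `0⁰ = 1`). -/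
theorem statement13 (φ : PowerSeries ℂ)
    (hφ0 : coeff 0 φ = 0) (hφ1 : coeff 1 φ = 1)
    (ν : ℂ) (hν : ν ≠ 0)
    (h : PowerSeries ℂ)
    (hh0 : coeff 0 h = 0) (hh1 : coeff 1 h = 1)
    (hinv : pcomp (X * pexp (-φ)) h = X) :
    (h = d⁄dX ℂ h * (X * pexp (C (1 / ν) * rescale (-ν) φ))) ↔
      ∀ m : ℕ,
        coeff m (pexp (C (-(1 / ν)) * rescale (-ν) φ)) =
          ∑ n ∈ range (m + 1), ((m : ℂ) ^ n / (n.factorial : ℂ)) * coeff m (φ ^ n) :=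
  statement13_general φ hφ0 ν h hh0 hinv
end

section
/- Let f ∈ X + X²ℂ[[X]] with compositional inverse H ∈ X + X²ℂ[[X]] (H∘f = X), and let p_n ∈ ℂ[α] be the associated binomial-type polynomials, p_n(α) := n!·Σ_{k=0}^{n} (αᵏ/k!)·coeff_n(Hᵏ). Let u := f''·(f')⁻¹ ∈ ℂ[[X]] (well-defined since f' is a unit), and for a polynomial P let u(D)P := Σ_k (coeff_k u)·P^{(k)}. Then for every n ≥ 0: p_{n+1}(α) = α · [(M_α − 1·u(D)) ∘ (M_α − 2·u(D)) ∘ ⋯ ∘ (M_α − n·u(D))](1), where M_α is multiplication by α, the factors are composed in the written order (the factor M_α − n·u(D) acts first, on the constant polynomial 1), and the empty composition (n = 0) is the identity. In the paper's notation: p_{n+1}^f(α)/α = (α − f''(D)/f'(D))⋯(α − n·f''(D)/f'(D))·1. -/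
open PowerSeries Finset

/-- `u(D)P = Σ_k (coeff_k u)·P⁽ᵏ⁾` for a power series `u` and a polynomial `P`. -/
noncomputable def opD (u : PowerSeries ℂ) (P : Polynomial ℂ) : Polynomial ℂ :=
  ∑ k ∈ range (P.natDegree + 1), coeff k u • (Polynomial.derivative^[k] P)

/-- Apply the product of factors `M_α − j·u(D)` for `j` running through the list
(head outermost, so the last element of the list acts first). -/
noncomputable def applyFactors (u : PowerSeries ℂ) : List ℕ → Polynomial ℂ → Polynomial ℂ
  | [], P => P
  | j :: js, P =>
      Polynomial.X * applyFactors u js P - (j : ℂ) • opD u (applyFactors u js P)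

/-!
Let `E_m(g) = expCoeff H g m ∈ ℂ[α]` be the coefficient of `X^m` in `g · exp(α H)`, so that
`p_m = m! E_m(1)`. Differentiating in `α` multiplies by `H`, hence
`u(D) E_m(g) = E_m(g · u(H))`; differentiating in `X` gives
`(m + 1) E_{m+1}(g) = E_m(g') + α E_m(g H')`. As `H ∘ f = X` makes `H` the two-sided
compositional inverse of `f`, differentiating `f(H) = X` twice gives `H'' = -u(H) H'²`, so
`(H'^e)' = -e H'^{e+1} u(H)`, and the two rules combine into
`(α - e u(D)) E_t(H'^{e+1}) = (t + 1) E_{t+1}(H'^e)`. Starting from `E_0(H'^{n+1}) = 1`, the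
factors `e = n, …, 1` produce `n! E_n(H')`, and `(n + 1) E_{n+1}(1) = α E_n(H')` concludes.
-/

namespace PowerSeries

variable {R : Type*} [CommRing R]

theorem coeff_mul_pow_of_lt {H : R⟦X⟧} (hH : constantCoeff H = 0) (g : R⟦X⟧) {m k : ℕ}
    (h : m < k) : coeff m (g * H ^ k) = 0 :=
  X_pow_dvd_iff.mp ((pow_dvd_pow_of_dvd (X_dvd_iff.mpr hH) k).mul_left g) m h

theorem coeff_mul_subst_eq_sum {H : R⟦X⟧} (hH : constantCoeff H = 0) (g a : R⟦X⟧)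
    (m : ℕ) :
    coeff m (g * a.subst H) = ∑ k ∈ range (m + 1), coeff k a * coeff m (g * H ^ k) := by
  have hs : HasSubst H := HasSubst.of_constantCoeff_zero' hH
  have htail : ∀ s : R⟦X⟧, coeff m (g * (H ^ (m + 1) * s)) = 0 := fun s => by
    rw [mul_comm (H ^ _), ← mul_assoc]
    exact coeff_mul_pow_of_lt hH _ (by omega)
  -- `a = X^(m+1) s + trunc (m+1) a`, and the `s`-part becomes `H^(m+1) s(H)`, which is
  -- invisible in degree `m`.
  conv_lhs => rw [eq_X_pow_mul_shift_add_trunc (m + 1) a]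
  rw [subst_add hs, subst_mul hs, subst_pow hs, subst_X hs, subst_coe hs,
    Polynomial.aeval_def, eval₂_trunc_eq_sum_range, mul_add, map_add, htail, zero_add,
    mul_sum, map_sum]
  refine sum_congr rfl fun k _ => ?_
  rw [Algebra.algebraMap_eq_smul_one, smul_mul_assoc, one_mul, mul_smul_comm, coeff_smul,
    smul_eq_mul]

theorem eq_substInvOfIsUnit_of_subst_eq_X {f H : R⟦X⟧} (hf0 : constantCoeff f = 0)
    (hf1 : IsUnit (coeff 1 f)) (h : H.subst f = X) : H = f.substInvOfIsUnit hf1 := by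
  have hf : HasSubst f := HasSubst.of_constantCoeff_zero' hf0
  have hg : HasSubst (f.substInvOfIsUnit hf1) := HasSubst.substInvOfIsUnit f hf1
  calc H = H.subst (f.subst (f.substInvOfIsUnit hf1)) := by
        rw [subst_substInvOfIsUnit_right f hf0 hf1, X_subst]
    _ = (X : R⟦X⟧).subst (f.substInvOfIsUnit hf1) := by rw [← subst_comp_subst_apply hf hg, h]
    _ = f.substInvOfIsUnit hf1 := subst_X hg

theorem derivative_derivative_eq_neg_subst_mul_sq {f H u : R⟦X⟧} (hH : constantCoeff H = 0)
    (hfH : f.subst H = X) (hu : u * d⁄dX R f = d⁄dX R (d⁄dX R f)) :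
    d⁄dX R (d⁄dX R H) = -(u.subst H * d⁄dX R H ^ 2) := by
  have hs : HasSubst H := HasSubst.of_constantCoeff_zero' hH
  have chain : (d⁄dX R f).subst H * d⁄dX R H = 1 := by
    rw [← derivative_subst hs, hfH, derivative_X]
  have chain₂ : (d⁄dX R (d⁄dX R f)).subst H * d⁄dX R H ^ 2
      + (d⁄dX R f).subst H * d⁄dX R (d⁄dX R H) = 0 := by
    have := congrArg (d⁄dX R) chain
    rw [Derivation.leibniz, derivative_subst hs, derivative_one, smul_eq_mul, smul_eq_mul]
      at this
    linear_combination this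
  have hu' : u.subst H * (d⁄dX R f).subst H = (d⁄dX R (d⁄dX R f)).subst H := by
    rw [← subst_mul hs, hu]
  linear_combination (-(d⁄dX R (d⁄dX R H) + u.subst H * d⁄dX R H ^ 2)) * chain
    + d⁄dX R H * chain₂ + d⁄dX R H ^ 3 * hu'

end PowerSeries

theorem pcomp_eq_subst_s18 {g : ℂ⟦X⟧} (hg : constantCoeff g = 0) (a : ℂ⟦X⟧) :
    pcomp a g = a.subst g := by
  ext m
  simpa [pcomp] using (coeff_mul_subst_eq_sum hg 1 a m).symm

section ExpCoeff

variable {K : Type*} [Field K]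

noncomputable def expCoeff (H g : K⟦X⟧) (m : ℕ) : Polynomial K :=
  ∑ k ∈ range (m + 1),
    (coeff m (g * H ^ k) / (k.factorial : K)) • (Polynomial.X ^ k : Polynomial K)

theorem expCoeff_zero (H g : K⟦X⟧) : expCoeff H g 0 = Polynomial.C (constantCoeff g) := by
  simp [expCoeff, Polynomial.smul_eq_C_mul]

theorem expCoeff_smul (H g : K⟦X⟧) (c : K) (m : ℕ) :
    expCoeff H (c • g) m = c • expCoeff H g m := by
  simp only [expCoeff, smul_sum, smul_mul_assoc, map_smul, smul_smul, smul_eq_mul, mul_div_assoc]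

variable {H : K⟦X⟧} (hH : constantCoeff H = 0)
include hH

theorem coeff_expCoeff (g : K⟦X⟧) (m k : ℕ) :
    (expCoeff H g m).coeff k = coeff m (g * H ^ k) / (k.factorial : K) := by
  simp only [expCoeff, Polynomial.finsetSum_coeff, Polynomial.coeff_smul, Polynomial.coeff_X_pow,
    smul_eq_mul, mul_ite, mul_one, mul_zero, sum_ite_eq, mem_range]
  split_ifs with hk
  · rfl
  · rw [coeff_mul_pow_of_lt hH g (by omega), zero_div]

theorem natDegree_expCoeff_le (g : K⟦X⟧) (m : ℕ) : (expCoeff H g m).natDegree ≤ m :=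
  Polynomial.natDegree_le_iff_coeff_eq_zero.mpr fun k hk => by
    rw [coeff_expCoeff hH, coeff_mul_pow_of_lt hH g (by exact_mod_cast hk), zero_div]

variable [CharZero K]

theorem derivative_expCoeff (g : K⟦X⟧) (m : ℕ) :
    Polynomial.derivative (expCoeff H g m) = expCoeff H (g * H) m := by
  ext k
  rw [Polynomial.coeff_derivative, coeff_expCoeff hH, coeff_expCoeff hH, Nat.factorial_succ,
    pow_succ', ← mul_assoc]
  push_cast
  field_simp

theorem iterate_derivative_expCoeff (g : K⟦X⟧) (m k : ℕ) :
    Polynomial.derivative^[k] (expCoeff H g m) = expCoeff H (g * H ^ k) m := by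
  induction k with
  | zero => simp
  | succ k ih =>
    rw [Function.iterate_succ_apply', ih, derivative_expCoeff hH, mul_assoc, ← pow_succ]

theorem succ_smul_expCoeff_succ (g : K⟦X⟧) (m : ℕ) :
    ((m : K) + 1) • expCoeff H g (m + 1)
      = expCoeff H (d⁄dX K g) m + Polynomial.X * expCoeff H (g * d⁄dX K H) m := by
  ext k
  rcases k with _ | k
  · simp only [Polynomial.coeff_smul, coeff_expCoeff hH, pow_zero, mul_one,
      Nat.factorial_zero, Nat.cast_one, div_one, smul_eq_mul, Polynomial.coeff_add,
      coeff_derivative, Polynomial.mul_coeff_zero, Polynomial.coeff_X_zero, zero_mul, add_zero]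
    ring
  · have hd : coeff (m + 1) (g * H ^ (k + 1)) * (m + 1)
        = coeff m (d⁄dX K g * H ^ (k + 1)) + (k + 1) * coeff m (g * d⁄dX K H * H ^ k) := by
      rw [← coeff_derivative, Derivation.leibniz, derivative_pow, smul_eq_mul, smul_eq_mul,
        Nat.add_sub_cancel, map_add,
        show g * (((k + 1 : ℕ) : K⟦X⟧) * H ^ k * d⁄dX K H)
            = (k + 1) • (g * d⁄dX K H * H ^ k) by
          rw [nsmul_eq_mul]; push_cast; ring,
        map_nsmul, nsmul_eq_mul, mul_comm (H ^ (k + 1))]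
      push_cast
      ring
    have hk : (k.factorial : K) ≠ 0 := Nat.cast_ne_zero.mpr k.factorial_ne_zero
    have hk1 : (k : K) + 1 ≠ 0 := Nat.cast_add_one_ne_zero k
    rw [Polynomial.coeff_smul, Polynomial.coeff_add, Polynomial.coeff_X_mul, coeff_expCoeff hH,
      coeff_expCoeff hH, coeff_expCoeff hH, smul_eq_mul, Nat.factorial_succ]
    push_cast
    field_simp
    linear_combination hd

end ExpCoeff

section Operator

theorem opD_eq_sum_of_natDegree_le (u : ℂ⟦X⟧) {P : Polynomial ℂ} {N : ℕ}
    (h : P.natDegree ≤ N) :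
    opD u P = ∑ k ∈ range (N + 1), coeff k u • Polynomial.derivative^[k] P := by
  refine sum_subset (range_subset_range.mpr (by omega)) fun k _ hk => ?_
  rw [Polynomial.iterate_derivative_eq_zero (by simpa using hk), smul_zero]

theorem opD_smul (u : ℂ⟦X⟧) (c : ℂ) (P : Polynomial ℂ) :
    opD u (c • P) = c • opD u P := by
  rw [opD_eq_sum_of_natDegree_le u (Polynomial.natDegree_smul_le c P), opD, smul_sum]
  exact sum_congr rfl fun k _ => by rw [Polynomial.iterate_derivative_smul, smul_comm]

variable {H : ℂ⟦X⟧} (hH : constantCoeff H = 0)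
include hH

theorem opD_expCoeff (u g : ℂ⟦X⟧) (m : ℕ) :
    opD u (expCoeff H g m) = expCoeff H (g * u.subst H) m := by
  ext j
  rw [opD_eq_sum_of_natDegree_le u (natDegree_expCoeff_le hH g m), Polynomial.finsetSum_coeff,
    coeff_expCoeff hH, mul_right_comm, coeff_mul_subst_eq_sum hH, sum_div]
  refine sum_congr rfl fun k _ => ?_
  rw [iterate_derivative_expCoeff hH, Polynomial.coeff_smul, coeff_expCoeff hH, smul_eq_mul,
    mul_right_comm g]
  ring

theorem X_mul_sub_smul_opD_expCoeff {u : ℂ⟦X⟧}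
    (hW : d⁄dX ℂ (d⁄dX ℂ H) = -(u.subst H * d⁄dX ℂ H ^ 2)) (e t : ℕ) :
    Polynomial.X * expCoeff H (d⁄dX ℂ H ^ (e + 1)) t
        - (e : ℂ) • opD u (expCoeff H (d⁄dX ℂ H ^ (e + 1)) t)
      = ((t : ℂ) + 1) • expCoeff H (d⁄dX ℂ H ^ e) (t + 1) := by
  have hd :
      d⁄dX ℂ (d⁄dX ℂ H ^ e) = (-(e : ℂ)) • (d⁄dX ℂ H ^ (e + 1) * u.subst H) := by
    rw [derivative_pow, hW]
    rcases e with _ | e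
    · simp
    · rw [smul_eq_C_mul, map_neg, map_natCast]
      push_cast
      ring
  rw [succ_smul_expCoeff_succ hH, hd, expCoeff_smul, opD_expCoeff hH, ← pow_succ, neg_smul]
  abel

theorem applyFactors_range_map {u : ℂ⟦X⟧} (hH1 : constantCoeff (d⁄dX ℂ H) = 1)
    (hW : d⁄dX ℂ (d⁄dX ℂ H) = -(u.subst H * d⁄dX ℂ H ^ 2)) (t a : ℕ) :
    applyFactors u ((List.range t).map (· + a + 1)) 1
      = (t.factorial : ℂ) • expCoeff H (d⁄dX ℂ H ^ (a + 1)) t := by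
  induction t generalizing a with
  | zero => simp [applyFactors, expCoeff_zero, hH1]
  | succ t ih =>
    have hshift : (· + a + 1) ∘ Nat.succ = (· + (a + 1) + 1) := by
      funext i
      simp only [Function.comp_apply]
      omega
    rw [List.range_succ_eq_map, List.map_cons, List.map_map, hshift, zero_add, applyFactors,
      ih, opD_smul, mul_smul_comm, smul_comm _ (t.factorial : ℂ), ← smul_sub,
      X_mul_sub_smul_opD_expCoeff hH hW, smul_smul, Nat.factorial_succ]
    push_cast
    ring_nf

end Operator

theorem statement18_general (f H : PowerSeries ℂ)
    (hf0 : coeff 0 f = 0) (hf1 : coeff 1 f = 1)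
    (hH : pcomp H f = X)
    (u : PowerSeries ℂ)
    (hu : u * d⁄dX ℂ f = d⁄dX ℂ (d⁄dX ℂ f)) :
    ∀ n : ℕ,
      ((n + 1).factorial : ℂ) •
          ∑ k ∈ range (n + 2),
            (coeff (n + 1) (H ^ k) / (k.factorial : ℂ)) • (Polynomial.X ^ k : Polynomial ℂ) =
        Polynomial.X * applyFactors u ((List.range n).map (· + 1)) 1 := by
  intro n
  rw [coeff_zero_eq_constantCoeff_apply] at hf0
  have hf1' : IsUnit (coeff 1 f) := hf1 ▸ isUnit_one
  have hHinv : H = f.substInvOfIsUnit hf1' :=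
    eq_substInvOfIsUnit_of_subst_eq_X hf0 hf1' (by rwa [← pcomp_eq_subst_s18 hf0])
  have hH0 : constantCoeff H = 0 := hHinv ▸ constantCoeff_substInvOfIsUnit f hf1'
  have hH1 : constantCoeff (d⁄dX ℂ H) = 1 := by
    rw [← coeff_zero_eq_constantCoeff_apply, coeff_derivative, hHinv,
      coeff_one_substInvOfIsUnit]
    simp [hf1]
  have hW := derivative_derivative_eq_neg_subst_mul_sq hH0
    (hHinv ▸ subst_substInvOfIsUnit_right f hf0 hf1') hu
  calc ((n + 1).factorial : ℂ) • ∑ k ∈ range (n + 2),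
          (coeff (n + 1) (H ^ k) / (k.factorial : ℂ)) • (Polynomial.X ^ k : Polynomial ℂ)
      = (n.factorial : ℂ) • (((n : ℂ) + 1) • expCoeff H 1 (n + 1)) := by
        simp only [expCoeff, one_mul, smul_smul, Nat.factorial_succ]
        push_cast
        ring_nf
    _ = Polynomial.X * ((n.factorial : ℂ) • expCoeff H (d⁄dX ℂ H ^ (0 + 1)) n) := by
        rw [succ_smul_expCoeff_succ hH0, derivative_one, one_mul, zero_add, pow_one,
          show expCoeff H 0 n = 0 by simp [expCoeff], zero_add, mul_smul_comm]
    _ = Polynomial.X * applyFactors u ((List.range n).map (· + 1)) 1 := by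
        rw [← applyFactors_range_map hH0 hH1 hW n 0]

/-- **Proposition 3.3, formula (3.3).** Let `f ∈ X + X²ℂ[[X]]` with compositional
inverse `H`, let `p_n(α) = n!·Σ_{k≤n} (αᵏ/k!)·coeff_n(Hᵏ)` be the associated
binomial-type polynomials, and let `u = f''/f'` (i.e. `u·f' = f''`).  Then for
every `n ≥ 0`:
`p_{n+1}(α) = α·(α − 1·f''(D)/f'(D))·(α − 2·f''(D)/f'(D))⋯(α − n·f''(D)/f'(D))·1`,
the factor `α − n·f''(D)/f'(D)` acting first on the constant polynomial `1`. -/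
theorem statement18 (f H : PowerSeries ℂ)
    (hf0 : coeff 0 f = 0) (hf1 : coeff 1 f = 1)
    (hH0 : coeff 0 H = 0) (hH1 : coeff 1 H = 1)
    (hH : pcomp H f = X)
    (u : PowerSeries ℂ)
    (hu : u * d⁄dX ℂ f = d⁄dX ℂ (d⁄dX ℂ f)) :
    ∀ n : ℕ,
      ((n + 1).factorial : ℂ) •
          ∑ k ∈ range (n + 2),
            (coeff (n + 1) (H ^ k) / (k.factorial : ℂ)) • (Polynomial.X ^ k : Polynomial ℂ) =
        Polynomial.X * applyFactors u ((List.range n).map (· + 1)) 1 :=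
  statement18_general f H hf0 hf1 hH u hu
end
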